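/- arXiv:2008.03133 — 4 statements merged into one kernel-verified Lean document; each statement's English description precedes it below -/
import Mathlib

section
/- Let Y be a nonempty set and let E̅ be an upper expectation on the set of all extended real variables on Y. If E̅ satisfies (E6), continuity with respect to lower cuts, then: (E2') E̅(f+g) ≤ E̅(f) + E̅(g) for all extended real variables f, g on Y; (E3') E̅(λ·f) = λ·E̅(f) for every real λ > 0 and every extended real variable f on Y; and (E4') E̅(f) ≤ E̅(g) whenever f ≤ g pointwise, for all extended real variables f, g on Y. Here all sums of extended reals (both the pointwise sum f+g and the sum of values E̅(f) + E̅(g)) use the convention (+∞) + (−∞) = (−∞) + (+∞) = +∞. -/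
open Filter Topology

noncomputable section

/-- Addition on the extended reals with the convention `(+∞) + (−∞) = (−∞) + (+∞) = +∞`. -/
def eadd (a b : EReal) : EReal := if a = ⊤ ∨ b = ⊤ then ⊤ else a + b

/-- An extended real variable is bounded below. -/
def BddBelowF {Y : Type*} (f : Y → EReal) : Prop := ∃ M : ℝ, ∀ y, (M : EReal) ≤ f y

/-- (E1): constants are preserved. -/
def UE1 {Y : Type*} (E : (Y → EReal) → EReal) : Prop :=
  ∀ c : ℝ, E (fun _ => (c : EReal)) = (c : EReal)

/-- (E2): sub-additivity on bounded below variables. -/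
def UE2 {Y : Type*} (E : (Y → EReal) → EReal) : Prop :=
  ∀ f g : Y → EReal, BddBelowF f → BddBelowF g →
    E (fun y => eadd (f y) (g y)) ≤ eadd (E f) (E g)

/-- (E3): positive homogeneity on bounded below variables. -/
def UE3 {Y : Type*} (E : (Y → EReal) → EReal) : Prop :=
  ∀ l : ℝ, 0 < l → ∀ f : Y → EReal, BddBelowF f →
    E (fun y => (l : EReal) * f y) = (l : EReal) * E f

/-- (E4): monotonicity on bounded below variables. -/
def UE4 {Y : Type*} (E : (Y → EReal) → EReal) : Prop :=
  ∀ f g : Y → EReal, BddBelowF f → BddBelowF g → (∀ y, f y ≤ g y) → E f ≤ E g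

/-- (E5): continuity with respect to non-decreasing sequences of non-negative variables. -/
def UE5 {Y : Type*} (E : (Y → EReal) → EReal) : Prop :=
  ∀ (fs : ℕ → Y → EReal) (f : Y → EReal),
    (∀ n y, 0 ≤ fs n y) → (∀ n y, fs n y ≤ fs (n + 1) y) →
    (∀ y, Tendsto (fun n => fs n y) atTop (𝓝 (f y))) →
    Tendsto (fun n => E (fs n)) atTop (𝓝 (E f))

/-- An upper expectation: a map satisfying (E1)–(E5). -/
def IsUpperExpectation {Y : Type*} (E : (Y → EReal) → EReal) : Prop :=
  UE1 E ∧ UE2 E ∧ UE3 E ∧ UE4 E ∧ UE5 E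

/-- an upper expectation on all extended real variables that satisfies (E6),
continuity with respect to lower cuts, satisfies (E2'), (E3') and (E4') on its whole domain. -/
theorem stmt0 {Y : Type*} [Nonempty Y] (E : (Y → EReal) → EReal)
    (hE : IsUpperExpectation E)
    (hE6 : ∀ f : Y → EReal,
      Tendsto (fun c : ℝ => E (fun y => max (f y) (c : EReal))) atBot (𝓝 (E f))) :
    (∀ f g : Y → EReal, E (fun y => eadd (f y) (g y)) ≤ eadd (E f) (E g)) ∧
    (∀ l : ℝ, 0 < l → ∀ f : Y → EReal, E (fun y => (l : EReal) * f y) = (l : EReal) * E f) ∧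
    (∀ f g : Y → EReal, (∀ y, f y ≤ g y) → E f ≤ E g) := by
  obtain ⟨hE1, hE2, hE3, hE4, hE5⟩ := hE
  have hbdd : ∀ (f : Y → EReal) (c : ℝ), BddBelowF (fun y => max (f y) (c : EReal)) :=
    fun f c => ⟨c, fun y => le_max_right _ _⟩
  have hmono : ∀ (f : Y → EReal) (c c' : ℝ), c' ≤ c →
      E (fun y => max (f y) (c' : EReal)) ≤ E (fun y => max (f y) (c : EReal)) :=
    fun f c c' h => hE4 _ _ (hbdd f c') (hbdd f c)
      (fun y => max_le_max le_rfl (EReal.coe_le_coe_iff.mpr h))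
  have hle : ∀ (f : Y → EReal) (c : ℝ), E f ≤ E (fun y => max (f y) (c : EReal)) := by
    intro f c
    apply le_of_tendsto (hE6 f)
    filter_upwards [eventually_le_atBot c] with c' hc' using hmono f c c' hc'
  refine ⟨?_, ?_, ?_⟩
  · -- (E2')
    intro f g
    set h : Y → EReal := fun y => eadd (f y) (g y) with hh
    have hpt : ∀ (c : ℝ) (y : Y),
        max (h y) (((c + c : ℝ)) : EReal) ≤ eadd (max (f y) (c : EReal)) (max (g y) (c : EReal)) := by
      intro c y
      by_cases htop : f y = ⊤ ∨ g y = ⊤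
      · have : max (f y) (c : EReal) = ⊤ ∨ max (g y) (c : EReal) = ⊤ := by
          rcases htop with h1 | h1
          · left; simp [h1]
          · right; simp [h1]
        rw [eadd, if_pos this]
        exact le_top
      · push_neg at htop
        have hne : ¬ (max (f y) (c : EReal) = ⊤ ∨ max (g y) (c : EReal) = ⊤) := by
          simp [htop.1, htop.2]
        rw [hh]
        simp only [eadd, if_neg hne, if_neg (show ¬ (f y = ⊤ ∨ g y = ⊤) from by tauto)]
        rw [EReal.coe_add]
        apply max_le
        · exact add_le_add (le_max_left _ _) (le_max_left _ _)
        · exact add_le_add (le_max_right _ _) (le_max_right _ _)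
    have hbddE : ∀ c : ℝ, BddBelowF (fun y => eadd (max (f y) (c : EReal)) (max (g y) (c : EReal))) := by
      intro c
      refine ⟨c + c, fun y => ?_⟩
      simp only [eadd]
      split
      · exact le_top
      · rw [EReal.coe_add]
        exact add_le_add (le_max_right _ _) (le_max_right _ _)
    have key : ∀ c : ℝ,
        E h ≤ eadd (E (fun y => max (f y) (c : EReal))) (E (fun y => max (g y) (c : EReal))) := by
      intro c
      calc E h ≤ E (fun y => max (h y) (((c + c : ℝ)) : EReal)) := hle h (c + c)
        _ ≤ E (fun y => eadd (max (f y) (c : EReal)) (max (g y) (c : EReal))) :=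
            hE4 _ _ (hbdd h (c + c)) (hbddE c) (hpt c)
        _ ≤ _ := hE2 _ _ (hbdd f c) (hbdd g c)
    by_cases ht : E f = ⊤ ∨ E g = ⊤
    · rw [eadd, if_pos ht]; exact le_top
    push_neg at ht
    obtain ⟨hf, hg⟩ := ht
    have hev : ∀ (φ : Y → EReal), E φ ≠ ⊤ →
        ∀ᶠ c : ℝ in atBot, E (fun y => max (φ y) (c : EReal)) ≠ ⊤ := by
      intro φ hφ
      exact (hE6 φ).eventually (eventually_ne_nhds hφ)
    have hsum : Tendsto
        (fun c : ℝ => E (fun y => max (f y) (c : EReal)) + E (fun y => max (g y) (c : EReal)))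
        atBot (𝓝 (E f + E g)) := by
      have hc : ContinuousAt (fun p : EReal × EReal => p.1 + p.2) (E f, E g) :=
        EReal.continuousAt_add (Or.inl hf) (Or.inr hg)
      exact hc.tendsto.comp ((hE6 f).prodMk_nhds (hE6 g))
    have hfin : E h ≤ E f + E g := by
      apply ge_of_tendsto hsum
      filter_upwards [hev f hf, hev g hg] with c h1 h2
      have hk := key c
      rwa [eadd, if_neg (by tauto)] at hk
    rw [eadd, if_neg (by tauto)]
    exact hfin
  · -- (E3')
    intro l hl f
    have hl0 : (0 : EReal) ≤ (l : EReal) := EReal.coe_nonneg.mpr hl.le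
    have hmax : ∀ (x : EReal) (c : ℝ),
        max ((l : EReal) * x) (((l * c : ℝ)) : EReal) = (l : EReal) * max x (c : EReal) := by
      intro x c
      rw [EReal.coe_mul]
      rcases le_total x (c : EReal) with h | h
      · rw [max_eq_right h, max_eq_right (mul_le_mul_of_nonneg_left h hl0)]
      · rw [max_eq_left h, max_eq_left (mul_le_mul_of_nonneg_left h hl0)]
    have h1 : Tendsto
        (fun c : ℝ => E (fun y => max ((l : EReal) * f y) (((l * c : ℝ)) : EReal))) atBot
        (𝓝 (E (fun y => (l : EReal) * f y))) :=
      (hE6 (fun y => (l : EReal) * f y)).comp (tendsto_id.const_mul_atBot hl)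
    have h2 : ∀ c : ℝ, E (fun y => max ((l : EReal) * f y) (((l * c : ℝ)) : EReal))
        = (l : EReal) * E (fun y => max (f y) (c : EReal)) := by
      intro c
      have := hE3 l hl (fun y => max (f y) (c : EReal)) (hbdd f c)
      rw [← this]
      congr 1
      funext y
      exact hmax (f y) c
    have h3 : Tendsto (fun c : ℝ => (l : EReal) * E (fun y => max (f y) (c : EReal))) atBot
        (𝓝 ((l : EReal) * E f)) := by
      have hc : ContinuousAt (fun z : EReal => (l : EReal) * z) (E f) := by
        have := EReal.continuousAt_mul (p := ((l : EReal), E f))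
          (by simp [ne_of_gt hl]) (by simp [ne_of_gt hl]) (by simp) (by simp)
        exact this.comp (by fun_prop)
      exact hc.tendsto.comp (hE6 f)
    have h1' : Tendsto (fun c : ℝ => (l : EReal) * E (fun y => max (f y) (c : EReal))) atBot
        (𝓝 (E (fun y => (l : EReal) * f y))) := by
      simpa only [h2] using h1
    exact tendsto_nhds_unique h1' h3
  · -- (E4')
    intro f g hfg
    exact le_of_tendsto_of_tendsto' (hE6 f) (hE6 g)
      (fun c => hE4 _ _ (hbdd f c) (hbdd g c) (fun y => max_le_max (hfg y) le_rfl))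
end
end

section
/- Let Y be a finite nonempty set, let D be a set of extended real variables on Y containing all bounded below ones, and let E̅* : D → ℝ̄ be any map. Then E̅* is an upper expectation on D if and only if there exists a coherent upper prevision E̅ on the set of all gambles on Y such that E̅*(f) = lim_{c→+∞} E̅(f^{∧c}) for every bounded below extended real variable f on Y (this limit exists since E̅(f^{∧c}) is non-decreasing in c). -/
open Filter Topology

noncomputable section

/-- A coherent upper prevision on the gambles on a finite set `Y` (every real-valued
function on a finite set is a gamble): (C1)–(C3). -/
def IsCoherentUpperPrevision {Y : Type*} [Fintype Y] [Nonempty Y] (P : (Y → ℝ) → ℝ) : Prop :=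
  (∀ f : Y → ℝ, P f ≤ ⨆ y, f y) ∧
  (∀ f g : Y → ℝ, P (fun y => f y + g y) ≤ P f + P g) ∧
  (∀ l : ℝ, 0 < l → ∀ f : Y → ℝ, P (fun y => l * f y) = l * P f)

/-!
On bounded below variables an upper expectation `E` is determined by its values on gambles: by
(E4) `E (min f c)` increases with `c`, and (E5) applied to `min f (M + n) - M`, where `M` is a lower
bound of `f`, together with the translation rule `E (f + r) = E f + r` coming from (E1)–(E2), shows
that its limit is `E f`; the restriction of `E` to gambles is coherent by (E1)–(E4). Conversely,
the cut extension `f ↦ sup_c P (min f c)` of a coherent upper prevision `P` inherits (E1)–(E4) from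
`P` cut by cut, and (E5) because `P` is 1-Lipschitz for the sup norm, so that
`P (min fₙ c) → P (min f c)`. Finally, (E1)–(E5) only involve bounded below variables.
-/

lemma eadd_eq_add {a b : EReal} (ha : a ≠ ⊥) (hb : b ≠ ⊥) : eadd a b = a + b := by
  unfold eadd
  split_ifs with h
  · rcases h with rfl | rfl
    · rw [EReal.top_add_of_ne_bot hb]
    · rw [EReal.add_top_of_ne_bot ha]
  · rfl

lemma eadd_coe_right (a : EReal) (r : ℝ) : eadd a r = a + r := by
  rcases eq_or_ne a ⊥ with rfl | ha
  · simp [eadd]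
  · exact eadd_eq_add ha (EReal.coe_ne_bot r)

lemma add_le_eadd (a b : EReal) : a + b ≤ eadd a b := by
  unfold eadd
  split_ifs
  exacts [le_top, le_rfl]

lemma EReal.add_coe_neg_cancel (a : EReal) (r : ℝ) : a + r + ↑(-r) = a := by
  rw [EReal.coe_neg, ← sub_eq_add_neg, EReal.add_sub_cancel_right]

lemma EReal.tendsto_add_coe {α : Type*} {l : Filter α} {u : α → EReal} {a : EReal}
    (hu : Tendsto u l (𝓝 a)) (r : ℝ) : Tendsto (fun x => u x + r) l (𝓝 (a + r)) :=
  (EReal.continuousAt_add (Or.inr (EReal.coe_ne_bot r)) (Or.inr (EReal.coe_ne_top r))).tendsto.comp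
    (hu.prodMk_nhds tendsto_const_nhds)

lemma EReal.min_add_le_add_min {a b : EReal} {M₁ M₂ c : ℝ} (ha : M₁ ≤ a) (hb : M₂ ≤ b)
    (hc : M₁ + M₂ ≤ c) : min (a + b) c ≤ min a ↑(c - M₂) + min b ↑(c - M₁) := by
  rcases le_or_gt a ↑(c - M₂) with ha' | ha'
  · rcases le_or_gt b ↑(c - M₁) with hb' | hb'
    · rw [min_eq_left ha', min_eq_left hb']
      exact min_le_left _ _
    · rw [min_eq_right hb'.le]
      calc min (a + b) c ≤ c := min_le_right _ _
        _ = ↑M₁ + ↑(c - M₁) := by rw [← EReal.coe_add, add_sub_cancel]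
        _ ≤ min a ↑(c - M₂) + ↑(c - M₁) := by
          gcongr
          exact le_min ha (EReal.coe_le_coe (by linarith))
  · rw [min_eq_right ha'.le]
    calc min (a + b) c ≤ c := min_le_right _ _
      _ = ↑(c - M₂) + ↑M₂ := by rw [← EReal.coe_add, _root_.sub_add_cancel]
      _ ≤ ↑(c - M₂) + min b ↑(c - M₁) := by
        gcongr
        exact le_min hb (EReal.coe_le_coe (by linarith))

section BddBelowF

variable {Y : Type*}

lemma BddBelowF.ne_bot {f : Y → EReal} (hf : BddBelowF f) (y : Y) : f y ≠ ⊥ :=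
  let ⟨M, hM⟩ := hf
  ((EReal.bot_lt_coe M).trans_le (hM y)).ne'

lemma BddBelowF.const (c : ℝ) : BddBelowF fun _ : Y => (c : EReal) :=
  ⟨c, fun _ => le_rfl⟩

lemma BddBelowF.of_nonneg {f : Y → EReal} (hf : ∀ y, 0 ≤ f y) : BddBelowF f :=
  ⟨0, fun y => by simpa using hf y⟩

lemma BddBelowF.add {f g : Y → EReal} (hf : BddBelowF f) (hg : BddBelowF g) :
    BddBelowF fun y => f y + g y :=
  let ⟨M₁, hM₁⟩ := hf
  let ⟨M₂, hM₂⟩ := hg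
  ⟨M₁ + M₂, fun y => by rw [EReal.coe_add]; exact add_le_add (hM₁ y) (hM₂ y)⟩

lemma BddBelowF.eadd {f g : Y → EReal} (hf : BddBelowF f) (hg : BddBelowF g) :
    BddBelowF fun y => eadd (f y) (g y) :=
  let ⟨M, hM⟩ := hf.add hg
  ⟨M, fun y => (hM y).trans (add_le_eadd _ _)⟩

lemma BddBelowF.min {f g : Y → EReal} (hf : BddBelowF f) (hg : BddBelowF g) :
    BddBelowF fun y => min (f y) (g y) :=
  let ⟨M₁, hM₁⟩ := hf
  let ⟨M₂, hM₂⟩ := hg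
  ⟨Min.min M₁ M₂, fun y => by
    rw [EReal.coe_strictMono.monotone.map_min]; exact min_le_min (hM₁ y) (hM₂ y)⟩

lemma BddBelowF.const_mul {f : Y → EReal} (hf : BddBelowF f) {l : ℝ} (hl : 0 ≤ l) :
    BddBelowF fun y => (l : EReal) * f y :=
  let ⟨M, hM⟩ := hf
  ⟨l * M, fun y => by
    rw [EReal.coe_mul]; exact mul_le_mul_of_nonneg_left (hM y) (EReal.coe_nonneg.2 hl)⟩

lemma bddBelowF_coe [Finite Y] (f : Y → ℝ) : BddBelowF fun y => (f y : EReal) :=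
  let ⟨M, hM⟩ := (Set.finite_range f).bddBelow
  ⟨M, fun y => EReal.coe_le_coe (hM ⟨y, rfl⟩)⟩

end BddBelowF

section UpperCut

variable {Y : Type*}

/-- `toReal` loses nothing when `f` is bounded below, since then `⊥ < min f c < ⊤`. -/
def upperCut (f : Y → EReal) (c : ℝ) : Y → ℝ := fun y => (min (f y) c).toReal

lemma min_coe_ne_top (x : EReal) (c : ℝ) : min x c ≠ ⊤ :=
  ne_top_of_le_ne_top (EReal.coe_ne_top c) (min_le_right _ _)

lemma min_coe_ne_bot {x : EReal} (hx : x ≠ ⊥) (c : ℝ) : min x c ≠ ⊥ := by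
  rw [ne_eq, min_eq_bot, not_or]
  exact ⟨hx, EReal.coe_ne_bot c⟩

lemma coe_upperCut {f : Y → EReal} {y : Y} (hy : f y ≠ ⊥) (c : ℝ) :
    (upperCut f c y : EReal) = min (f y) c :=
  EReal.coe_toReal (min_coe_ne_top _ _) (min_coe_ne_bot hy c)

lemma upperCut_le_upperCut {f g : Y → EReal} {c c' : ℝ} {y : Y} (hy : f y ≠ ⊥) (hfg : f y ≤ g y)
    (hc : c ≤ c') : upperCut f c y ≤ upperCut g c' y :=
  EReal.toReal_le_toReal (min_le_min hfg (EReal.coe_le_coe hc)) (min_coe_ne_bot hy c)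
    (min_coe_ne_top _ _)

end UpperCut

namespace IsUpperExpectation

variable {Y : Type*} {E : (Y → EReal) → EReal}

lemma congr (hE : IsUpperExpectation E) {E' : (Y → EReal) → EReal}
    (h : ∀ f, BddBelowF f → E f = E' f) : IsUpperExpectation E' := by
  obtain ⟨h1, h2, h3, h4, h5⟩ := hE
  refine ⟨fun c => ?_, fun f g hf hg => ?_, fun l hl f hf => ?_, fun f g hf hg hfg => ?_,
    fun fs f h0 hmono hlim => ?_⟩
  · rw [← h _ (BddBelowF.const c), h1]
  · rw [← h _ (hf.eadd hg), ← h f hf, ← h g hg]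
    exact h2 f g hf hg
  · rw [← h _ (hf.const_mul hl.le), ← h f hf]
    exact h3 l hl f hf
  · rw [← h f hf, ← h g hg]
    exact h4 f g hf hg hfg
  · have hf : BddBelowF f := .of_nonneg fun y => ge_of_tendsto' (hlim y) fun n => h0 n y
    simp only [← h _ (BddBelowF.of_nonneg (h0 _)), ← h f hf]
    exact h5 fs f h0 hmono hlim

lemma map_add_const (hE : IsUpperExpectation E) {f : Y → EReal} (hf : BddBelowF f) (r : ℝ) :
    E (fun y => f y + r) = E f + r := by
  have hle : ∀ f : Y → EReal, BddBelowF f → ∀ r : ℝ, E (fun y => f y + r) ≤ E f + r :=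
    fun f hf r => by
      simpa only [eadd_coe_right, hE.1 r] using hE.2.1 f _ hf (BddBelowF.const r)
  refine le_antisymm (hle f hf r) ?_
  rw [← (EReal.addLECancellable_coe (-r)).add_le_add_iff_right, EReal.add_coe_neg_cancel]
  simpa only [EReal.add_coe_neg_cancel] using hle _ (hf.add (BddBelowF.const r)) (-r)

lemma tendsto_min (hE : IsUpperExpectation E) {f : Y → EReal} (hf : BddBelowF f) :
    Tendsto (fun c : ℝ => E fun y => min (f y) c) atTop (𝓝 (E f)) := by
  obtain ⟨-, -, -, hE_mono, hE_cont⟩ := id hE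
  obtain ⟨M, hM⟩ := id hf
  have hcut (c : ℝ) : BddBelowF fun y => min (f y) c := hf.min (BddBelowF.const c)
  have hmono : Monotone fun c : ℝ => E fun y => min (f y) c := fun c c' h =>
    hE_mono _ _ (hcut c) (hcut c') fun y => min_le_min le_rfl (EReal.coe_le_coe h)
  convert tendsto_atTop_iSup hmono
  refine le_antisymm ?_ (iSup_le fun c => hE_mono _ _ (hcut c) hf fun y => min_le_left _ _)
  -- (E5) for the non-negative variables `min f (M + n) - M`, which increase to `f - M`
  let fs : ℕ → Y → EReal := fun n y => min (f y) ↑(M + n) + ↑(-M)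
  have h0 (n : ℕ) (y : Y) : 0 ≤ fs n y := by
    rw [← EReal.coe_zero, ← add_neg_cancel M, EReal.coe_add]
    exact add_le_add_left (le_min (hM y) (EReal.coe_le_coe (by simp))) _
  have hfs_mono (n : ℕ) (y : Y) : fs n y ≤ fs (n + 1) y := by
    dsimp only [fs]
    gcongr
    linarith
  have hfs_lim (y : Y) : Tendsto (fun n => fs n y) atTop (𝓝 (f y + ↑(-M))) := by
    have hM_add : Tendsto (fun n : ℕ => ((M + n : ℝ) : EReal)) atTop (𝓝 ⊤) :=
      EReal.tendsto_coe_atTop.comp (tendsto_atTop_add_const_left _ _ tendsto_natCast_atTop_atTop)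
    simpa only [min_top_right] using
      EReal.tendsto_add_coe (tendsto_const_nhds.min hM_add) (-M)
  have hlim := hE_cont fs _ h0 hfs_mono hfs_lim
  rw [hE.map_add_const hf] at hlim
  rw [← (EReal.addLECancellable_coe (-M)).add_le_add_iff_right]
  refine le_of_tendsto' hlim fun n => ?_
  rw [hE.map_add_const (hcut _)]
  exact add_le_add_left (le_iSup (fun c : ℝ => E fun y => min (f y) c) (M + n)) _

lemma map_coe_le_iSup [Finite Y] (hE : IsUpperExpectation E) (f : Y → ℝ) :
    E (fun y => f y) ≤ ↑(⨆ y, f y) := by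
  obtain ⟨hE_const, -, -, hE_mono, -⟩ := hE
  rw [← hE_const]
  exact hE_mono _ _ (bddBelowF_coe f) (BddBelowF.const _) fun y =>
    EReal.coe_le_coe (le_ciSup (Set.finite_range f).bddAbove y)

lemma iInf_le_map_coe [Finite Y] (hE : IsUpperExpectation E) (f : Y → ℝ) :
    ↑(⨅ y, f y) ≤ E (fun y => f y) := by
  obtain ⟨hE_const, -, -, hE_mono, -⟩ := hE
  rw [← hE_const]
  exact hE_mono _ _ (BddBelowF.const _) (bddBelowF_coe f) fun y =>
    EReal.coe_le_coe (ciInf_le (Set.finite_range f).bddBelow y)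

end IsUpperExpectation

def restrictToGambles {Y : Type*} (E : (Y → EReal) → EReal) (f : Y → ℝ) : ℝ :=
  (E fun y => f y).toReal

lemma IsUpperExpectation.coe_restrictToGambles {Y : Type*} [Finite Y] {E : (Y → EReal) → EReal}
    (hE : IsUpperExpectation E) (f : Y → ℝ) : (restrictToGambles E f : EReal) = E fun y => f y :=
  EReal.coe_toReal (ne_top_of_le_ne_top (EReal.coe_ne_top _) (hE.map_coe_le_iSup f))
    (ne_bot_of_le_ne_bot (EReal.coe_ne_bot _) (hE.iInf_le_map_coe f))

lemma IsUpperExpectation.isCoherentUpperPrevision_restrictToGambles {Y : Type*} [Fintype Y]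
    [Nonempty Y] {E : (Y → EReal) → EReal} (hE : IsUpperExpectation E) :
    IsCoherentUpperPrevision (restrictToGambles E) := by
  refine ⟨fun f => ?_, fun f g => ?_, fun l hl f => ?_⟩
  · rw [← EReal.coe_le_coe_iff, hE.coe_restrictToGambles]
    exact hE.map_coe_le_iSup f
  · rw [← EReal.coe_le_coe_iff, EReal.coe_add, hE.coe_restrictToGambles,
      hE.coe_restrictToGambles, hE.coe_restrictToGambles]
    simpa only [← hE.coe_restrictToGambles, eadd_coe_right, ← EReal.coe_add]
      using hE.2.1 _ _ (bddBelowF_coe f) (bddBelowF_coe g)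
  · apply EReal.coe_injective
    rw [EReal.coe_mul, hE.coe_restrictToGambles, hE.coe_restrictToGambles]
    simpa only [EReal.coe_mul] using hE.2.2.1 l hl _ (bddBelowF_coe f)

namespace IsCoherentUpperPrevision

variable {Y : Type*} [Fintype Y] [Nonempty Y] {P : (Y → ℝ) → ℝ}

lemma map_zero (hP : IsCoherentUpperPrevision P) : P (fun _ => 0) = 0 := by
  have h := hP.2.2 2 two_pos fun _ => 0
  simp only [mul_zero] at h
  linarith

lemma le_add_iSup_sub (hP : IsCoherentUpperPrevision P) (f g : Y → ℝ) :
    P f ≤ P g + ⨆ y, (f y - g y) :=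
  calc P f = P fun y => g y + (f y - g y) := by simp only [add_sub_cancel]
    _ ≤ P g + P fun y => f y - g y := hP.2.1 _ _
    _ ≤ P g + ⨆ y, (f y - g y) := by gcongr; exact hP.1 _

lemma map_const (hP : IsCoherentUpperPrevision P) (c : ℝ) : P (fun _ => c) = c := by
  have hle : P (fun _ => c) ≤ c := (hP.1 _).trans_eq ciSup_const
  have hge := hP.le_add_iSup_sub (fun _ => 0) fun _ => c
  simp only [zero_sub, ciSup_const, hP.map_zero] at hge
  linarith

lemma mono (hP : IsCoherentUpperPrevision P) {f g : Y → ℝ} (hfg : ∀ y, f y ≤ g y) : P f ≤ P g :=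
  (hP.le_add_iSup_sub f g).trans <|
    add_le_of_nonpos_right (ciSup_le fun y => sub_nonpos.2 (hfg y))

lemma lipschitzWith_one (hP : IsCoherentUpperPrevision P) : LipschitzWith 1 P :=
  LipschitzWith.of_le_add fun f g => (hP.le_add_iSup_sub f g).trans <| by
    gcongr
    exact ciSup_le fun y => (le_abs_self _).trans (dist_le_pi_dist f g y)

end IsCoherentUpperPrevision

def cutExtension {Y : Type*} (P : (Y → ℝ) → ℝ) (f : Y → EReal) : EReal :=
  ⨆ c : ℝ, (P (upperCut f c) : EReal)

section CutExtension

variable {Y : Type*} {P : (Y → ℝ) → ℝ}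

lemma coe_le_cutExtension (f : Y → EReal) (c : ℝ) : (P (upperCut f c) : EReal) ≤ cutExtension P f :=
  le_iSup (fun c => (P (upperCut f c) : EReal)) c

lemma cutExtension_ne_bot (f : Y → EReal) : cutExtension P f ≠ ⊥ :=
  ((EReal.bot_lt_coe _).trans_le (coe_le_cutExtension f 0)).ne'

variable [Fintype Y] [Nonempty Y]

lemma cutExtension_mono (hP : IsCoherentUpperPrevision P) {f g : Y → EReal} (hf : ∀ y, f y ≠ ⊥)
    (hfg : ∀ y, f y ≤ g y) : cutExtension P f ≤ cutExtension P g :=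
  iSup_mono fun _ => EReal.coe_le_coe (hP.mono fun y => upperCut_le_upperCut (hf y) (hfg y) le_rfl)

lemma tendsto_cutExtension (hP : IsCoherentUpperPrevision P) {f : Y → EReal} (hf : ∀ y, f y ≠ ⊥) :
    Tendsto (fun c : ℝ => (P (upperCut f c) : EReal)) atTop (𝓝 (cutExtension P f)) :=
  tendsto_atTop_iSup fun _ _ hc =>
    EReal.coe_le_coe (hP.mono fun y => upperCut_le_upperCut (hf y) le_rfl hc)

lemma cutExtension_const (hP : IsCoherentUpperPrevision P) (k : ℝ) :
    cutExtension P (fun _ => k) = k := by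
  have hcut (c : ℝ) : upperCut (fun _ : Y => (k : EReal)) c = fun _ => min k c := by
    ext y
    simp only [upperCut, ← EReal.coe_strictMono.monotone.map_min, EReal.toReal_coe]
  refine le_antisymm (iSup_le fun c => ?_) ?_
  · rw [hcut, hP.map_const]
    exact EReal.coe_le_coe (min_le_left _ _)
  · simpa [hcut, hP.map_const] using coe_le_cutExtension (P := P) (fun _ => (k : EReal)) k

lemma cutExtension_add_le (hP : IsCoherentUpperPrevision P) {f g : Y → EReal} (hf : BddBelowF f)
    (hg : BddBelowF g) :
    cutExtension P (fun y => f y + g y) ≤ cutExtension P f + cutExtension P g := by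
  obtain ⟨M₁, hM₁⟩ := id hf
  obtain ⟨M₂, hM₂⟩ := id hg
  have hfg := hf.add hg
  refine le_of_tendsto (tendsto_cutExtension hP hfg.ne_bot) ?_
  filter_upwards [eventually_ge_atTop (M₁ + M₂)] with c hc
  have hcut : ∀ y, upperCut (fun y => f y + g y) c y
      ≤ upperCut f (c - M₂) y + upperCut g (c - M₁) y := fun y => by
    rw [← EReal.coe_le_coe_iff, EReal.coe_add, coe_upperCut (hf.ne_bot y),
      coe_upperCut (hg.ne_bot y), coe_upperCut (f := fun y => f y + g y) (hfg.ne_bot y)]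
    exact EReal.min_add_le_add_min (hM₁ y) (hM₂ y) hc
  calc (P (upperCut (fun y => f y + g y) c) : EReal)
      ≤ ↑(P (upperCut f (c - M₂)) + P (upperCut g (c - M₁))) :=
        EReal.coe_le_coe ((hP.mono hcut).trans (hP.2.1 _ _))
    _ ≤ cutExtension P f + cutExtension P g := by
      rw [EReal.coe_add]
      exact add_le_add (coe_le_cutExtension _ _) (coe_le_cutExtension _ _)

lemma cutExtension_const_mul (hP : IsCoherentUpperPrevision P) {l : ℝ} (hl : 0 < l)
    {f : Y → EReal} (hf : BddBelowF f) :
    cutExtension P (fun y => (l : EReal) * f y) = l * cutExtension P f := by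
  have hl0 : (0 : EReal) ≤ l := EReal.coe_nonneg.2 hl.le
  have hmul_mono : Monotone ((l : EReal) * ·) := fun _ _ h => mul_le_mul_of_nonneg_left h hl0
  have hcut (c : ℝ) :
      upperCut (fun y => (l : EReal) * f y) (l * c) = fun y => l * upperCut f c y := by
    ext y
    have hmul_min : min ((l : EReal) * f y) ↑(l * c) = l * min (f y) c := by
      rw [EReal.coe_mul]
      exact hmul_mono.map_min.symm
    simp only [upperCut, hmul_min, EReal.toReal_mul, EReal.toReal_coe]
  refine tendsto_nhds_unique ((tendsto_cutExtension hP (hf.const_mul hl.le).ne_bot).comp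
    (tendsto_id.const_mul_atTop hl)) ?_
  refine (EReal.Tendsto.const_mul (tendsto_cutExtension hP hf.ne_bot)
    (Or.inl (EReal.coe_ne_bot l)) (Or.inl (EReal.coe_ne_top l))).congr fun c => ?_
  simp only [Function.comp_apply, id, hcut, hP.2.2 l hl, EReal.coe_mul]

lemma tendsto_cutExtension_of_monotone (hP : IsCoherentUpperPrevision P) (fs : ℕ → Y → EReal)
    (f : Y → EReal) (h0 : ∀ n y, 0 ≤ fs n y) (hmono : ∀ n y, fs n y ≤ fs (n + 1) y)
    (hlim : ∀ y, Tendsto (fun n => fs n y) atTop (𝓝 (f y))) :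
    Tendsto (fun n => cutExtension P (fs n)) atTop (𝓝 (cutExtension P f)) := by
  have hfs_mono : Monotone fs := monotone_nat_of_le_succ fun n y => hmono n y
  have hfs_le (n : ℕ) (y : Y) : fs n y ≤ f y :=
    Monotone.ge_of_tendsto (fun _ _ h => hfs_mono h y) (hlim y) n
  have hfs_ne_bot (n : ℕ) (y : Y) : fs n y ≠ ⊥ := ((h0 n y).trans_lt' EReal.bot_lt_zero).ne'
  have hf_ne_bot (y : Y) : f y ≠ ⊥ := ne_bot_of_le_ne_bot (hfs_ne_bot 0 y) (hfs_le 0 y)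
  convert tendsto_atTop_iSup fun n m h => cutExtension_mono hP (hfs_ne_bot n) (hfs_mono h)
  refine le_antisymm (iSup_le fun c => ?_)
    (iSup_le fun n => cutExtension_mono hP (hfs_ne_bot n) (hfs_le n))
  have hcut : Tendsto (fun n => upperCut (fs n) c) atTop (𝓝 (upperCut f c)) :=
    tendsto_pi_nhds.2 fun y => (EReal.tendsto_toReal (min_coe_ne_top _ _)
      (min_coe_ne_bot (hf_ne_bot y) c)).comp ((hlim y).min tendsto_const_nhds)
  have hP_cut := (continuous_coe_real_ereal.tendsto _).comp
    ((hP.lipschitzWith_one.continuous.tendsto _).comp hcut)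
  exact le_of_tendsto' hP_cut fun n => (coe_le_cutExtension _ c).trans
    (le_iSup (fun n => cutExtension P (fs n)) n)

lemma isUpperExpectation_cutExtension (hP : IsCoherentUpperPrevision P) :
    IsUpperExpectation (cutExtension P) := by
  refine ⟨cutExtension_const hP, fun f g hf hg => ?_,
    fun l hl f hf => cutExtension_const_mul hP hl hf,
    fun f g hf _ hfg => cutExtension_mono hP hf.ne_bot hfg, tendsto_cutExtension_of_monotone hP⟩
  simp only [eadd_eq_add (hf.ne_bot _) (hg.ne_bot _),
    eadd_eq_add (cutExtension_ne_bot f) (cutExtension_ne_bot g)]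
  exact cutExtension_add_le hP hf hg

end CutExtension

theorem stmt1_general {Y : Type*} [Fintype Y] [Nonempty Y]
    (Estar : (Y → EReal) → EReal) :
    IsUpperExpectation Estar ↔
      ∃ P : (Y → ℝ) → ℝ, IsCoherentUpperPrevision P ∧
        ∀ f : Y → EReal, BddBelowF f →
          Tendsto (fun c : ℝ => ((P (fun y => (min (f y) (c : EReal)).toReal)) : EReal))
            atTop (𝓝 (Estar f)) := by
  constructor
  · intro hE
    refine ⟨restrictToGambles Estar, hE.isCoherentUpperPrevision_restrictToGambles, fun f hf => ?_⟩
    refine (hE.tendsto_min hf).congr fun c => ?_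
    rw [hE.coe_restrictToGambles]
    congr 1
    funext y
    exact (coe_upperCut (hf.ne_bot y) c).symm
  · rintro ⟨P, hP, hlim⟩
    exact (isUpperExpectation_cutExtension hP).congr fun f hf =>
      tendsto_nhds_unique (tendsto_cutExtension hP hf.ne_bot) (hlim f hf)

/-- a map `E⋆` on a domain `D` containing all bounded below variables is an
upper expectation if and only if it is, on the bounded below variables, obtained from some
coherent upper prevision on the gambles by continuity with respect to upper cuts (E14). -/
theorem stmt1 {Y : Type*} [Fintype Y] [Nonempty Y]
    (D : Set (Y → EReal)) (hD : ∀ f, BddBelowF f → f ∈ D)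
    (Estar : (Y → EReal) → EReal) :
    IsUpperExpectation Estar ↔
      ∃ P : (Y → ℝ) → ℝ, IsCoherentUpperPrevision P ∧
        ∀ f : Y → EReal, BddBelowF f →
          Tendsto (fun c : ℝ => ((P (fun y => (min (f y) (c : EReal)).toReal)) : EReal))
            atTop (𝓝 (Estar f)) :=
  stmt1_general Estar
end
end

section
/- For every bounded below supermartingale M and every situation s: M(s) ≥ inf_{ω∈Γ(s)} limsup_{n→∞} M(ω^n) ≥ inf_{ω∈Γ(s)} liminf_{n→∞} M(ω^n). -/
open Filter Topology

noncomputable section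

/-- The situation formed by the first `n` states of the path `ω`. -/
def pfx {X : Type*} (ω : ℕ → X) (n : ℕ) : List X := List.ofFn (fun i : Fin n => ω i)

/-- The cylinder event of all paths that go through the situation `s`. -/
def Gamma {X : Type*} (s : List X) : Set (ℕ → X) := {ω | pfx ω s.length = s}

/-- A process is bounded below. -/
def BddBelowP {X : Type*} (M : List X → EReal) : Prop := ∃ B : ℝ, ∀ t, (B : EReal) ≤ M t

/-- A supermartingale for the imprecise probabilities tree `Q`. -/
def IsSupermartingale {X : Type*} (Q : List X → (X → EReal) → EReal)
    (M : List X → EReal) : Prop :=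
  ∀ s : List X, Q s (fun x => M (s ++ [x])) ≤ M s

/-- The pathwise limit inferior of a process. -/
def liminfP {X : Type*} (M : List X → EReal) (ω : ℕ → X) : EReal :=
  Filter.liminf (fun n => M (pfx ω n)) atTop

/-- The game-theoretic upper expectation `E_V(f | s)`. -/
def upExp {X : Type*} (Q : List X → (X → EReal) → EReal)
    (f : (ℕ → X) → EReal) (s : List X) : EReal :=
  sInf {x : EReal | ∃ M : List X → EReal, IsSupermartingale Q M ∧ BddBelowP M ∧
    (∀ ω ∈ Gamma s, f ω ≤ liminfP M ω) ∧ M s = x}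

/-- An event `A` is strictly almost sure within `Γ(s)`: some `s`-test supermartingale
converges to `+∞` on every path of `Γ(s)` outside `A`. -/
def StrictlyAS {X : Type*} (Q : List X → (X → EReal) → EReal) (s : List X)
    (A : Set (ℕ → X)) : Prop :=
  ∃ T : List X → EReal, IsSupermartingale Q T ∧ (∀ t, 0 ≤ T t) ∧ T s = 1 ∧
    ∀ ω ∈ Gamma s, ω ∉ A → Tendsto (fun n => T (pfx ω n)) atTop (𝓝 (⊤ : EReal))

/-- An `n`-measurable global variable only depends on the first `n` states. -/
def NMeasurable {X : Type*} (n : ℕ) (f : (ℕ → X) → EReal) : Prop :=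
  ∀ ω ω' : ℕ → X, pfx ω n = pfx ω' n → f ω = f ω'

/-- A finitary global variable is `n`-measurable for some `n`. -/
def Finitary {X : Type*} (f : (ℕ → X) → EReal) : Prop := ∃ n : ℕ, NMeasurable n f

/-- The bounded below global variables that are pointwise limits of finitary variables. -/
def VbLim {X : Type*} : Set ((ℕ → X) → EReal) :=
  {f | BddBelowF f ∧ ∃ gs : ℕ → (ℕ → X) → EReal, (∀ n, Finitary (gs n)) ∧
    ∀ ω, Tendsto (fun n => gs n ω) atTop (𝓝 (f ω))}

/-- for a bounded below supermartingale `M` and a situation `s`,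
`M(s) ≥ inf_{ω∈Γ(s)} limsup M(ω^n) ≥ inf_{ω∈Γ(s)} liminf M(ω^n)`. -/
theorem stmt3 {X : Type*} [Fintype X] [Nonempty X]
    (Q : List X → (X → EReal) → EReal) (hQ : ∀ s : List X, IsUpperExpectation (Q s))
    (M : List X → EReal) (hM : IsSupermartingale Q M) (hMb : BddBelowP M)
    (s : List X) :
    (⨅ ω ∈ Gamma s, Filter.limsup (fun n => M (pfx ω n)) atTop) ≤ M s ∧
    (⨅ ω ∈ Gamma s, liminfP M ω) ≤
      ⨅ ω ∈ Gamma s, Filter.limsup (fun n => M (pfx ω n)) atTop := by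
  constructor
  · -- choose descending extensions
    have key : ∀ t : List X, ∃ x : X, M (t ++ [x]) ≤ M t := by
      intro t
      by_contra h
      push_neg at h
      obtain ⟨x₀, hx₀⟩ := Finset.exists_min_image Finset.univ
        (fun x => M (t ++ [x])) ⟨Classical.arbitrary X, Finset.mem_univ _⟩
      obtain ⟨B, hB⟩ := hMb
      obtain ⟨hQ1, hQ2, hQ3, hQ4, hQ5⟩ := hQ t
      have hle : M (t ++ [x₀]) ≤ Q t (fun x => M (t ++ [x])) := by
        rcases eq_top_or_lt_top (M (t ++ [x₀])) with htop | hlt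
        · have hall : ∀ x : X, M (t ++ [x]) = ⊤ := fun x =>
            top_le_iff.mp (htop ▸ hx₀.2 x (Finset.mem_univ x))
          have : ∀ c : ℝ, (c : EReal) ≤ Q t (fun x => M (t ++ [x])) := by
            intro c
            calc (c : EReal) = Q t (fun _ => (c : EReal)) := (hQ1 c).symm
              _ ≤ Q t (fun x => M (t ++ [x])) := by
                  apply hQ4 _ _ ⟨c, fun _ => le_refl _⟩ ⟨B, fun x => hB _⟩
                  intro x; rw [hall x]; exact le_top
          have : Q t (fun x => M (t ++ [x])) = ⊤ := by
            by_contra hne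
            obtain ⟨r, hr1, hr2⟩ :=
              EReal.exists_between_coe_real (lt_top_iff_ne_top.mpr hne)
            exact absurd (this r) (not_le.mpr hr1)
          rw [htop, this]
        · -- value is a real number
          have hbot : (B : EReal) ≤ M (t ++ [x₀]) := hB _
          lift M (t ++ [x₀]) to ℝ using ⟨hlt.ne, fun hb => by
            simp [hb] at hbot⟩ with r hr
          calc (r : EReal) = Q t (fun _ => (r : EReal)) := (hQ1 r).symm
            _ ≤ Q t (fun x => M (t ++ [x])) := by
                apply hQ4 _ _ ⟨r, fun _ => le_refl _⟩ ⟨B, fun x => hB _⟩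
                intro x
                exact hr ▸ hx₀.2 x (Finset.mem_univ x)
      exact absurd (hle.trans (hM t)) (not_le.mpr (h x₀))
    choose pick hpick using key
    let t : ℕ → List X := fun n => Nat.rec s (fun _ u => u ++ [pick u]) n
    have ht0 : t 0 = s := rfl
    have htsucc : ∀ n, t (n + 1) = t n ++ [pick (t n)] := fun _ => rfl
    have hMt : ∀ n, M (t n) ≤ M s := by
      intro n
      induction n with
      | zero => exact le_refl _
      | succ n ih => exact (hpick (t n)).trans ih
    have hlen : ∀ n, (t n).length = s.length + n := by
      intro n
      induction n with
      | zero => simp [ht0]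
      | succ n ih => rw [htsucc, List.length_append, ih]; simp; ring
    have hpref : ∀ m n, m ≤ n → t m <+: t n := by
      intro m n h
      induction n with
      | zero =>
        have : m = 0 := Nat.le_zero.mp h
        subst this; exact List.prefix_refl _
      | succ n ih =>
        rcases Nat.lt_or_ge m (n + 1) with h' | h'
        · refine (ih (Nat.lt_succ_iff.mp h')).trans ?_
          rw [htsucc]
          exact List.prefix_append _ _
        · have : m = n + 1 := le_antisymm h h'
          subst this; exact List.prefix_refl _
    let ω : ℕ → X := fun n => (t (n + 1)).getD n (Classical.arbitrary X)
    have hωget : ∀ n (i : ℕ) (hi : i < (t n).length), ω i = (t n)[i] := by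
      intro n i hi
      have hi1 : i < (t (i + 1)).length := by have h2 := hlen (i + 1); omega
      have hω1 : ω i = (t (i + 1))[i] := List.getD_eq_getElem _ _ hi1
      rcases le_total (i + 1) n with h | h
      · rw [hω1, (hpref _ _ h).getElem hi1]
      · rw [hω1, (hpref _ _ h).getElem hi]
    have hpfx : ∀ n, pfx ω (s.length + n) = t n := by
      intro n
      apply List.ext_getElem
      · simp [pfx, hlen]
      · intro i h1 h2
        have h1' : i < s.length + n := by simpa [pfx] using h1
        simp only [pfx, List.getElem_ofFn]
        exact hωget n i h2
    have hωΓ : ω ∈ Gamma s := by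
      have h0 := hpfx 0
      rw [ht0] at h0
      simpa [Gamma] using h0
    have hev : ∀ᶠ n in atTop, M (pfx ω n) ≤ M s := by
      filter_upwards [eventually_ge_atTop s.length] with n hn
      obtain ⟨k, rfl⟩ := Nat.exists_eq_add_of_le hn
      rw [hpfx k]
      exact hMt k
    have hls : Filter.limsup (fun n => M (pfx ω n)) atTop ≤ M s :=
      Filter.limsup_le_of_le (by isBoundedDefault) hev
    exact le_trans (biInf_le _ hωΓ) hls
  · apply iInf_mono
    intro ω
    apply iInf_mono
    intro _
    exact Filter.liminf_le_limsup
end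
end

section
/- For every situation s of length n and every bounded below (n+1)-measurable global variable f : Ω → ℝ̄: E_V(f|s) = Q_s(f(s·)), where f(s·) : 𝒳 → ℝ̄ maps each x ∈ 𝒳 to the common value of f on Γ(sx). -/
/-! For `E_V(f|s) ≤ Q_s(g)`, the process that is constant `Q_s(g)` except strictly after `s`,
where it equals `g` of the state following `s`, is a bounded below supermartingale whose
`liminf` equals `f` on `Γ(s)`. Conversely, let `M` be any competitor. An upper expectation
dominates the minimum of a variable and `𝒳` is finite, so every situation has a successor at
which `M` does not increase; following these from `s ++ [x]` yields a path in `Γ(s ++ [x])`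
along which `liminf M ≤ M(s ++ [x])`, so `g ≤ M(s·)` and `Q_s(g) ≤ Q_s(M(s·)) ≤ M(s)`. -/

open Filter Topology

noncomputable section

section UpperExpectation

variable {Y : Type*} {E : (Y → EReal) → EReal}

theorem UE1.apply_const_top (h1 : UE1 E) (h5 : UE5 E) : E (fun _ => ⊤) = ⊤ := by
  have hnat : Tendsto (fun n : ℕ => ((n : ℝ) : EReal)) atTop (𝓝 ⊤) :=
    EReal.tendsto_coe_nhds_top_iff.2 tendsto_natCast_atTop_atTop
  have hlim := h5 (fun n _ => ((n : ℝ) : EReal)) (fun _ => ⊤) (fun n _ => by simp)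
    (fun n _ => by exact_mod_cast n.le_succ) (fun _ => hnat)
  exact tendsto_nhds_unique hlim (hnat.congr fun n => (h1 n).symm)

theorem UE1.apply_const_of_ne_bot (h1 : UE1 E) (h5 : UE5 E) {c : EReal} (hc : c ≠ ⊥) :
    E (fun _ => c) = c := by
  induction c using EReal.rec with
  | bot => exact absurd rfl hc
  | coe r => exact h1 r
  | top => exact h1.apply_const_top h5

theorem UE4.exists_apply_le [Finite Y] [Nonempty Y] (h4 : UE4 E) (h1 : UE1 E) (h5 : UE5 E)
    {h : Y → EReal} (hh : BddBelowF h) : ∃ y, h y ≤ E h := by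
  obtain ⟨y₀, hy₀⟩ := Finite.exists_min h
  obtain ⟨B, hB⟩ := hh
  refine ⟨y₀, ?_⟩
  calc h y₀ = E (fun _ => h y₀) :=
        (h1.apply_const_of_ne_bot h5 (ne_bot_of_le_ne_bot (EReal.coe_ne_bot B) (hB y₀))).symm
    _ ≤ E h := h4 _ _ ⟨B, fun _ => hB y₀⟩ ⟨B, hB⟩ hy₀

end UpperExpectation

section Paths

variable {X : Type*}

theorem pfx_length (ω : ℕ → X) (n : ℕ) : (pfx ω n).length = n := List.length_ofFn

theorem pfx_succ (ω : ℕ → X) (n : ℕ) : pfx ω (n + 1) = pfx ω n ++ [ω n] := by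
  simp only [pfx, List.ofFn_succ', List.concat_eq_append]
  rfl

theorem getElem?_pfx (ω : ℕ → X) {n i : ℕ} (h : i < n) : (pfx ω n)[i]? = some (ω i) := by
  simp [pfx, h]

theorem pfx_prefix (ω : ℕ → X) {n m : ℕ} (h : n ≤ m) : pfx ω n <+: pfx ω m := by
  induction m, h using Nat.le_induction with
  | base => exact List.prefix_rfl
  | succ m _ ih => exact pfx_succ ω m ▸ ih.trans (List.prefix_append _ _)

theorem mem_Gamma_append_singleton_iff {ω : ℕ → X} {s : List X} {x : X} :
    ω ∈ Gamma (s ++ [x]) ↔ ω ∈ Gamma s ∧ ω s.length = x := by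
  change pfx ω (s ++ [x]).length = s ++ [x] ↔ pfx ω s.length = s ∧ ω s.length = x
  rw [List.length_append, List.length_singleton, pfx_succ]
  exact ⟨fun h => ⟨(List.append_inj' h rfl).1, List.singleton_inj.1 (List.append_inj' h rfl).2⟩,
    fun ⟨hs, hx⟩ => by rw [hs, hx]⟩

theorem Gamma_nonempty [Nonempty X] (s : List X) : (Gamma s).Nonempty :=
  ⟨fun n => s.getD n (Classical.arbitrary X), List.ext_getElem (pfx_length _ _)
    fun i _ hi => by simp [pfx]⟩

theorem exists_pfx_eq_of_prefix_chain {L : ℕ → List X} (hL : ∀ n, L n <+: L (n + 1))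
    (hlen : ∀ n, n ≤ (L n).length) : ∃ ω : ℕ → X, ∀ n, pfx ω (L n).length = L n := by
  have hchain : ∀ {n m}, n ≤ m → L n <+: L m := fun h => by
    induction h with
    | refl => exact List.prefix_rfl
    | step _ ih => exact ih.trans (hL _)
  refine ⟨fun i => (L (i + 1))[i]'(hlen (i + 1)), fun n => ?_⟩
  refine List.ext_getElem (pfx_length _ _) fun i _ hi => ?_
  simp only [pfx, List.getElem_ofFn]
  rcases le_total (i + 1) n with h | h
  · exact (hchain h).getElem _
  · exact ((hchain h).getElem hi).symm

end Paths

section Supermartingales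

variable {X : Type*} {Q : List X → (X → EReal) → EReal}

theorem upExp_le {f : (ℕ → X) → EReal} {s : List X} {M : List X → EReal}
    (hM : IsSupermartingale Q M) (hb : BddBelowP M) (hf : ∀ ω ∈ Gamma s, f ω ≤ liminfP M ω) :
    upExp Q f s ≤ M s :=
  sInf_le ⟨M, hM, hb, hf, rfl⟩

theorem le_upExp {f : (ℕ → X) → EReal} {s : List X} {a : EReal}
    (h : ∀ M, IsSupermartingale Q M → BddBelowP M → (∀ ω ∈ Gamma s, f ω ≤ liminfP M ω) →
      a ≤ M s) :
    a ≤ upExp Q f s :=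
  le_sInf fun _ ⟨M, hM, hb, hf, hMs⟩ => hMs ▸ h M hM hb hf

theorem IsSupermartingale.exists_append_le [Finite X] [Nonempty X] (h1 : ∀ t, UE1 (Q t))
    (h4 : ∀ t, UE4 (Q t)) (h5 : ∀ t, UE5 (Q t)) {M : List X → EReal}
    (hM : IsSupermartingale Q M) (hb : BddBelowP M) (t : List X) :
    ∃ x, M (t ++ [x]) ≤ M t := by
  obtain ⟨B, hB⟩ := hb
  obtain ⟨x, hx⟩ := (h4 t).exists_apply_le (h1 t) (h5 t) (h := fun x => M (t ++ [x]))
    ⟨B, fun _ => hB _⟩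
  exact ⟨x, hx.trans (hM t)⟩

theorem exists_mem_Gamma_liminfP_le {M : List X → EReal}
    (hstep : ∀ t, ∃ x, M (t ++ [x]) ≤ M t) (t : List X) :
    ∃ ω ∈ Gamma t, liminfP M ω ≤ M t := by
  choose next hnext using hstep
  let L : ℕ → List X := fun n => (fun l => l ++ [next l])^[n] t
  have hL : ∀ n, L (n + 1) = L n ++ [next (L n)] := fun n =>
    Function.iterate_succ_apply' _ n t
  have hlen : ∀ n, (L n).length = t.length + n := fun n => by
    induction n with
    | zero => rfl
    | succ n ih => rw [hL, List.length_append, ih, List.length_singleton, Nat.add_assoc]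
  have hle : ∀ n, M (L n) ≤ M t := fun n => by
    induction n with
    | zero => exact le_rfl
    | succ n ih => exact hL n ▸ (hnext (L n)).trans ih
  obtain ⟨ω, hω⟩ := exists_pfx_eq_of_prefix_chain (L := L)
    (fun n => hL n ▸ List.prefix_append _ _) (fun n => hlen n ▸ Nat.le_add_left n _)
  refine ⟨ω, hω 0, liminf_le_of_frequently_le' (frequently_atTop.2 fun n =>
    ⟨t.length + n, Nat.le_add_left n _, ?_⟩)⟩
  rw [← hlen, hω]
  exact hle n

open Classical in
def stepProcess (s : List X) (g : X → EReal) (c : EReal) (t : List X) : EReal :=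
  if s <+: t then (t[s.length]?).elim c g else c

variable {s : List X} {g : X → EReal} {c : EReal}

theorem stepProcess_self : stepProcess s g c s = c := by
  simp [stepProcess]

theorem stepProcess_self_append (x : X) : stepProcess s g c (s ++ [x]) = g x := by
  simp [stepProcess]

theorem stepProcess_append_of_ne {t : List X} (ht : t ≠ s) (x : X) :
    stepProcess s g c (t ++ [x]) = stepProcess s g c t := by
  unfold stepProcess
  by_cases hst : s <+: t
  · have hlt : s.length < t.length :=
      lt_of_le_of_ne hst.length_le fun h => ht (hst.eq_of_length h).symm
    simp [hst, List.prefix_concat_iff, List.getElem?_append_left hlt]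
  · by_cases hs : s = t ++ [x]
    · subst hs
      simp [hst]
    · simp [hst, hs, List.prefix_concat_iff]

theorem stepProcess_pfx {ω : ℕ → X} (hω : ω ∈ Gamma s) {n : ℕ} (hn : s.length < n) :
    stepProcess s g c (pfx ω n) = g (ω s.length) := by
  have hs : s <+: pfx ω n := (hω : pfx ω s.length = s) ▸ pfx_prefix ω hn.le
  simp [stepProcess, hs, getElem?_pfx ω hn]

theorem liminfP_stepProcess {ω : ℕ → X} (hω : ω ∈ Gamma s) :
    liminfP (stepProcess s g c) ω = g (ω s.length) := by
  unfold liminfP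
  rw [liminf_congr ((eventually_gt_atTop s.length).mono fun n hn => stepProcess_pfx hω hn),
    liminf_const]

theorem coe_le_stepProcess {B : ℝ} (hgB : ∀ x, (B : EReal) ≤ g x) (hcB : (B : EReal) ≤ c)
    (t : List X) : (B : EReal) ≤ stepProcess s g c t := by
  unfold stepProcess
  split_ifs
  · cases t[s.length]? <;> simp [hcB, hgB]
  · exact hcB

theorem isSupermartingale_stepProcess (h1 : ∀ t, UE1 (Q t)) (h5 : ∀ t, UE5 (Q t)) {B : ℝ}
    (hgB : ∀ x, (B : EReal) ≤ g x) (hcB : (B : EReal) ≤ c) (hgc : Q s g ≤ c) :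
    IsSupermartingale Q (stepProcess s g c) := by
  intro t
  by_cases ht : t = s
  · subst ht
    simpa only [stepProcess_self_append, stepProcess_self] using hgc
  · simp only [stepProcess_append_of_ne ht]
    exact ((h1 t).apply_const_of_ne_bot (h5 t)
      (ne_bot_of_le_ne_bot (EReal.coe_ne_bot B) (coe_le_stepProcess hgB hcB t))).le

theorem upExp_le_apply (h1 : ∀ t, UE1 (Q t)) (h4 : ∀ t, UE4 (Q t)) (h5 : ∀ t, UE5 (Q t))
    {f : (ℕ → X) → EReal} (hg : ∀ x, ∀ ω ∈ Gamma (s ++ [x]), f ω = g x) {B : ℝ}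
    (hgB : ∀ x, (B : EReal) ≤ g x) :
    upExp Q f s ≤ Q s g := by
  have hQB : (B : EReal) ≤ Q s g :=
    (h1 s B).symm.le.trans (h4 s _ _ ⟨B, fun _ => le_rfl⟩ ⟨B, hgB⟩ hgB)
  refine (upExp_le (isSupermartingale_stepProcess h1 h5 hgB hQB le_rfl)
    ⟨B, coe_le_stepProcess hgB hQB⟩ fun ω hω => ?_).trans_eq stepProcess_self
  rw [liminfP_stepProcess hω, hg _ ω (mem_Gamma_append_singleton_iff.2 ⟨hω, rfl⟩)]

theorem apply_le_upExp [Finite X] [Nonempty X] (h1 : ∀ t, UE1 (Q t)) (h4 : ∀ t, UE4 (Q t))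
    (h5 : ∀ t, UE5 (Q t)) {f : (ℕ → X) → EReal} (hg : ∀ x, ∀ ω ∈ Gamma (s ++ [x]), f ω = g x)
    (hgb : BddBelowF g) :
    Q s g ≤ upExp Q f s :=
  le_upExp fun M hM hb hf => by
    obtain ⟨C, hC⟩ := hb
    have hgM : ∀ x, g x ≤ M (s ++ [x]) := fun x => by
      obtain ⟨ω, hω, hlim⟩ :=
        exists_mem_Gamma_liminfP_le (hM.exists_append_le h1 h4 h5 ⟨C, hC⟩) (s ++ [x])
      calc g x = f ω := (hg x ω hω).symm
        _ ≤ liminfP M ω := hf ω (mem_Gamma_append_singleton_iff.1 hω).1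
        _ ≤ M (s ++ [x]) := hlim
    exact (h4 s _ _ hgb ⟨C, fun _ => hC _⟩ hgM).trans (hM s)

end Supermartingales

theorem stmt6_general {X : Type*} [Fintype X] [Nonempty X]
    (Q : List X → (X → EReal) → EReal) (hQ : ∀ s : List X, IsUpperExpectation (Q s))
    (s : List X) (f : (ℕ → X) → EReal)
    (hbdd : BddBelowF f)
    (g : X → EReal) (hg : ∀ x : X, ∀ ω ∈ Gamma (s ++ [x]), f ω = g x) :
    upExp Q f s = Q s g := by
  have h1 := fun t => (hQ t).1
  have h4 := fun t => (hQ t).2.2.2.1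
  have h5 := fun t => (hQ t).2.2.2.2
  obtain ⟨B, hB⟩ := hbdd
  have hgB : ∀ x, (B : EReal) ≤ g x := fun x => by
    obtain ⟨ω, hω⟩ := Gamma_nonempty (s ++ [x])
    exact hg x ω hω ▸ hB ω
  exact le_antisymm (upExp_le_apply h1 h4 h5 hg hgB) (apply_le_upExp h1 h4 h5 hg ⟨B, hgB⟩)

/-- partial compatibility with the local models. For a situation `s` of length
`n` and a bounded below `(n+1)`-measurable global variable `f`, `E_V(f|s) = Q_s(f(s·))`,
where `f(s·)` maps each `x` to the common value `g x` of `f` on `Γ(s ++ [x])`. -/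
theorem stmt6 {X : Type*} [Fintype X] [Nonempty X]
    (Q : List X → (X → EReal) → EReal) (hQ : ∀ s : List X, IsUpperExpectation (Q s))
    (s : List X) (f : (ℕ → X) → EReal)
    (hmeas : NMeasurable (s.length + 1) f) (hbdd : BddBelowF f)
    (g : X → EReal) (hg : ∀ x : X, ∀ ω ∈ Gamma (s ++ [x]), f ω = g x) :
    upExp Q f s = Q s g :=
  stmt6_general Q hQ s f hbdd g hg
end
end
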